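/- (Series form of the recurrence criterion for the perturbed reflected random walk.) Let (α_n) be a sequence of real numbers with 0 < α_n < min{C, n/2} for all n ≥ 1, for some constant C > 0, and set λ_n = 1/2 + α_n/n and μ_n = 1/2 − α_n/n. Suppose there exist an integer K ≥ 1 and an index n_0 such that for all n > n_0, α_n ≤ (1/4)·(1 + ∑_{k=1}^{K} 1/(∏_{j=1}^{k} ln_{(j)} n)). Then the series ∑_{n=1}^∞ ∏_{k=1}^{n} (μ_k/λ_k) diverges, i.e. equals ∞ (equivalently, the associated reflected random walk with upward step probability 1/2 + α_{S_t}/S_t at state S_t > 0 is recurrent). -/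

import Mathlib

/-!
Write `μ_k / λ_k = (1/2 - y) / (1/2 + y)` with `y = α_k / k`, so that
`log (μ_k / λ_k) ≥ -4y - 16y²`. Since `1 / (x log x ⋯ log^[j] x)` is the derivative of
`log^[j+1]`, the hypothesis bounds `4y` by the increment of `log (x log x ⋯ log^[K] x)` over
`[k-1, k]`, and the terms `16y² ≤ 16C²/k²` telescope against `16C²/k`. Hence
`∏_{k ≤ n} μ_k / λ_k ≥ c / (n log n ⋯ log^[K] n)`, and the series of the right-hand side
diverges because its terms dominate the increments of `log^[K+1] n → ∞`.
-/

open Real Filter Finset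

namespace Real

-- the reciprocal of the derivative of `log^[j + 1]`
noncomputable def iterLogProd (j : ℕ) (x : ℝ) : ℝ := x * ∏ i ∈ Icc 1 j, log^[i] x

@[simp]
lemma iterLogProd_zero (x : ℝ) : iterLogProd 0 x = x := by
  simp [iterLogProd]

lemma iterLogProd_succ (j : ℕ) (x : ℝ) :
    iterLogProd (j + 1) x = iterLogProd j x * log^[j + 1] x := by
  rw [iterLogProd, iterLogProd, prod_Icc_succ_top (by omega), mul_assoc]

lemma iterLogProd_pos {j : ℕ} {x : ℝ} (hx : ∀ i ≤ j, 0 < log^[i] x) : 0 < iterLogProd j x :=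
  mul_pos (hx 0 j.zero_le) (prod_pos fun i hi => hx i (mem_Icc.1 hi).2)

lemma tendsto_iterate_log_atTop (j : ℕ) : Tendsto log^[j] atTop atTop := by
  induction j with
  | zero => exact tendsto_id
  | succ j ih => rw [Function.iterate_succ']; exact tendsto_log_atTop.comp ih

lemma eventually_forall_iterate_log_pos (j : ℕ) : ∀ᶠ x in atTop, ∀ i ≤ j, 0 < log^[i] x :=
  (Set.finite_Iic j).eventually_all.2 fun i _ =>
    (tendsto_iterate_log_atTop i).eventually_gt_atTop 0

lemma iterate_log_le_iterate_log {j : ℕ} {a b : ℝ} (hab : a ≤ b)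
    (ha : ∀ i < j, 0 < log^[i] a) : log^[j] a ≤ log^[j] b := by
  induction j with
  | zero => exact hab
  | succ j ih =>
    simp only [Function.iterate_succ_apply']
    exact log_le_log (ha j j.lt_succ_self) (ih fun i hi => ha i (hi.trans j.lt_succ_self))

lemma iterate_log_pos_of_le {j : ℕ} {a b : ℝ} (hab : a ≤ b) (ha : ∀ i ≤ j, 0 < log^[i] a) :
    ∀ i ≤ j, 0 < log^[i] b := fun i hi =>
  (ha i hi).trans_le (iterate_log_le_iterate_log hab fun i' hi' => ha i' (by omega))

lemma sub_div_le_log_sub_log {a b : ℝ} (ha : 0 < a) (hb : 0 < b) :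
    (b - a) / b ≤ log b - log a := by
  have := one_sub_inv_le_log_of_pos (div_pos hb ha)
  rw [log_div hb.ne' ha.ne', inv_div] at this
  rwa [sub_div, div_self hb.ne']

lemma log_sub_log_le_sub_div {a b : ℝ} (ha : 0 < a) (hb : 0 < b) :
    log b - log a ≤ (b - a) / a := by
  have := log_le_sub_one_of_pos (div_pos hb ha)
  rwa [log_div hb.ne' ha.ne', div_sub_one ha.ne'] at this

lemma sub_div_iterLogProd_le {j : ℕ} {a b : ℝ} (hab : a ≤ b) (ha : ∀ i ≤ j, 0 < log^[i] a) :
    (b - a) / iterLogProd j b ≤ log^[j + 1] b - log^[j + 1] a := by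
  have hb := iterate_log_pos_of_le hab ha
  induction j with
  | zero => simpa using sub_div_le_log_sub_log (ha 0 le_rfl) (hb 0 le_rfl)
  | succ j ih =>
    rw [iterLogProd_succ, ← div_div, Function.iterate_succ_apply' _ (j + 1),
      Function.iterate_succ_apply' _ (j + 1)]
    calc (b - a) / iterLogProd j b / log^[j + 1] b
        ≤ (log^[j + 1] b - log^[j + 1] a) / log^[j + 1] b :=
          div_le_div_of_nonneg_right
            (ih (fun i hi => ha i (by omega)) fun i hi => hb i (by omega)) (hb _ le_rfl).le
      _ ≤ _ := sub_div_le_log_sub_log (ha _ le_rfl) (hb _ le_rfl)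

lemma iterate_log_sub_le_sub_div {j : ℕ} {a b : ℝ} (hab : a ≤ b) (ha : ∀ i ≤ j, 0 < log^[i] a) :
    log^[j + 1] b - log^[j + 1] a ≤ (b - a) / iterLogProd j a := by
  have hb := iterate_log_pos_of_le hab ha
  induction j with
  | zero => simpa using log_sub_log_le_sub_div (ha 0 le_rfl) (hb 0 le_rfl)
  | succ j ih =>
    rw [iterLogProd_succ, ← div_div, Function.iterate_succ_apply' _ (j + 1),
      Function.iterate_succ_apply' _ (j + 1)]
    calc log (log^[j + 1] b) - log (log^[j + 1] a)
        ≤ (log^[j + 1] b - log^[j + 1] a) / log^[j + 1] a :=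
          log_sub_log_le_sub_div (ha _ le_rfl) (hb _ le_rfl)
      _ ≤ _ := div_le_div_of_nonneg_right
            (ih (fun i hi => ha i (by omega)) fun i hi => hb i (by omega)) (ha _ le_rfl).le

lemma log_iterLogProd_succ {j : ℕ} {x : ℝ} (hx : ∀ i ≤ j + 1, 0 < log^[i] x) :
    log (iterLogProd (j + 1) x) = log (iterLogProd j x) + log^[j + 2] x := by
  rw [iterLogProd_succ, Function.iterate_succ_apply' _ (j + 1),
    log_mul (iterLogProd_pos fun i hi => hx i (by omega)).ne' (hx _ le_rfl).ne']

lemma sub_mul_one_add_sum_div_le_log_iterLogProd_sub {K : ℕ} {a b : ℝ} (hab : a ≤ b)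
    (ha : ∀ i ≤ K, 0 < log^[i] a) :
    (b - a) * (1 + ∑ k ∈ Icc 1 K, 1 / ∏ j ∈ Icc 1 k, log^[j] b) / b ≤
      log (iterLogProd K b) - log (iterLogProd K a) := by
  have hb := iterate_log_pos_of_le hab ha
  induction K with
  | zero => simpa using sub_div_le_log_sub_log (ha 0 le_rfl) (hb 0 le_rfl)
  | succ K ih =>
    have hstep := sub_div_iterLogProd_le hab ha
    rw [log_iterLogProd_succ ha, log_iterLogProd_succ hb, sum_Icc_succ_top (by omega)]
    rw [iterLogProd] at hstep
    have := ih (fun i hi => ha i (by omega)) fun i hi => hb i (by omega)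
    calc (b - a) * (1 + (∑ k ∈ Icc 1 K, 1 / ∏ j ∈ Icc 1 k, log^[j] b
            + 1 / ∏ j ∈ Icc 1 (K + 1), log^[j] b)) / b
        = (b - a) * (1 + ∑ k ∈ Icc 1 K, 1 / ∏ j ∈ Icc 1 k, log^[j] b) / b
            + (b - a) / (b * ∏ i ∈ Icc 1 (K + 1), log^[i] b) := by ring
      _ ≤ _ := by linarith

lemma not_summable_inv_iterLogProd (K : ℕ) :
    ¬ Summable fun n : ℕ => (iterLogProd K n)⁻¹ := by
  obtain ⟨m, hm⟩ := eventually_atTop.1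
    (tendsto_natCast_atTop_atTop.eventually (eventually_forall_iterate_log_pos K))
  set L : ℕ → ℝ := fun n => log^[K + 1] (n + m : ℕ)
  have hpos (n : ℕ) : ∀ i ≤ K, 0 < log^[i] ((n + m : ℕ) : ℝ) := hm _ (by omega)
  have hcast (n : ℕ) : ((n + m : ℕ) : ℝ) ≤ (n + 1 + m : ℕ) := by simp
  have hmono (n : ℕ) : 0 ≤ L (n + 1) - L n :=
    sub_nonneg.2 (iterate_log_le_iterate_log (hcast n) fun i hi => hpos n i (by omega))
  have hstep (n : ℕ) : L (n + 1) - L n ≤ (iterLogProd K (n + m : ℕ))⁻¹ := by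
    simpa [L, add_right_comm (n : ℝ) 1 m] using iterate_log_sub_le_sub_div (hcast n) (hpos n)
  have hL : ¬ Summable fun n => L (n + 1) - L n := by
    refine (not_summable_iff_tendsto_nat_atTop_of_nonneg hmono).2 ?_
    simp_rw [sum_range_sub]
    exact tendsto_atTop_add_const_right _ _ ((tendsto_iterate_log_atTop (K + 1)).comp
      (tendsto_natCast_atTop_atTop.comp (tendsto_add_atTop_nat m)))
  exact fun h => hL (((summable_nat_add_iff m).2 h).of_nonneg_of_le hmono hstep)

end Real

lemma neg_four_mul_sub_sixteen_mul_sq_le_log_div {y : ℝ} (hy : 0 ≤ y) (hy' : 4 * y ≤ 1) :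
    -(4 * y) - 16 * y ^ 2 ≤ log ((1 / 2 - y) / (1 / 2 + y)) := by
  have hμ : 0 < 1 / 2 - y := by linarith
  refine le_trans ?_ (one_sub_inv_le_log_of_pos (div_pos hμ (by linarith)))
  rw [inv_div, le_sub_comm, div_le_iff₀ hμ]
  nlinarith [mul_nonneg (sq_nonneg y) (sub_nonneg.2 hy')]

lemma prod_Icc_mul_exp_sub_le_prod_Icc {r F : ℕ → ℝ} {m : ℕ} (hr : ∀ k, 1 ≤ k → 0 < r k)
    (hF : ∀ k ≥ m, F k - F (k + 1) ≤ log (r (k + 1))) :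
    ∀ n ≥ m, (∏ k ∈ Icc 1 m, r k) * exp (F m - F n) ≤ ∏ k ∈ Icc 1 n, r k := by
  have hPm : 0 ≤ ∏ k ∈ Icc 1 m, r k := (prod_pos fun k hk => hr k (mem_Icc.1 hk).1).le
  intro n hn
  induction n, hn using Nat.le_induction with
  | base => simp
  | succ n hn ih =>
    have hrn : exp (F n - F (n + 1)) ≤ r (n + 1) :=
      (le_log_iff_exp_le (hr _ (by omega))).1 (hF n hn)
    rw [prod_Icc_succ_top (by omega)]
    calc (∏ k ∈ Icc 1 m, r k) * exp (F m - F (n + 1))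
        = (∏ k ∈ Icc 1 m, r k) * exp (F m - F n) * exp (F n - F (n + 1)) := by
          rw [mul_assoc, ← exp_add, sub_add_sub_cancel]
      _ ≤ (∏ k ∈ Icc 1 n, r k) * r (n + 1) :=
          mul_le_mul ih hrn (exp_pos _).le ((mul_nonneg hPm (exp_pos _).le).trans ih)

lemma tendsto_sum_Icc_one_atTop_of_not_summable {f : ℕ → ℝ} (hf : ∀ n, 0 ≤ f n)
    (h : ¬ Summable f) : Tendsto (fun N => ∑ n ∈ Icc 1 N, f n) atTop atTop := by
  have hsum (N : ℕ) : ∑ n ∈ Icc 1 N, f n = ∑ n ∈ range (N + 1), f n - f 0 := by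
    rw [range_eq_Ico, sum_eq_sum_Ico_succ_bot (by omega : 0 < N + 1), zero_add,
      Ico_add_one_right_eq_Icc]
    ring
  simp_rw [hsum]
  exact tendsto_atTop_add_const_right _ _
    (((not_summable_iff_tendsto_nat_atTop_of_nonneg hf).1 h).comp (tendsto_add_atTop_nat 1))

lemma sub_le_log_half_sub_div_half_add {K : ℕ} {C a x : ℝ} (hx : ∀ i ≤ K, 0 < log^[i] x)
    (ha : 0 ≤ a) (haC : a ≤ C) (hxC : 4 * C ≤ x)
    (hsum : a ≤ 1 / 4 * (1 + ∑ k ∈ Icc 1 K, 1 / ∏ j ∈ Icc 1 k, log^[j] (x + 1))) :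
    log (iterLogProd K x) - 16 * C ^ 2 / x
        - (log (iterLogProd K (x + 1)) - 16 * C ^ 2 / (x + 1))
      ≤ log ((1 / 2 - a / (x + 1)) / (1 / 2 + a / (x + 1))) := by
  have hx0 : 0 < x := hx 0 K.zero_le
  have hx1 : 0 < x + 1 := by linarith
  set y := a / (x + 1)
  have hy : 4 * y ≤ log (iterLogProd K (x + 1)) - log (iterLogProd K x) := by
    have hlog := sub_mul_one_add_sum_div_le_log_iterLogProd_sub (b := x + 1) (by linarith) hx
    rw [add_sub_cancel_left, one_mul] at hlog
    refine le_trans ?_ hlog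
    rw [mul_div_assoc']
    exact div_le_div_of_nonneg_right (by linarith) hx1.le
  have hy2 : 16 * y ^ 2 ≤ 16 * C ^ 2 / x - 16 * C ^ 2 / (x + 1) := by
    have htel : 16 * C ^ 2 / x - 16 * C ^ 2 / (x + 1) = 16 * C ^ 2 / (x * (x + 1)) := by
      field_simp
      ring
    calc 16 * y ^ 2 ≤ 16 * (C / (x + 1)) ^ 2 := by
          gcongr
          exact div_le_div_of_nonneg_right haC hx1.le
      _ ≤ _ := by
          rw [htel, div_pow, mul_div_assoc']
          gcongr
          nlinarith
  have := neg_four_mul_sub_sixteen_mul_sq_le_log_div (y := y) (by positivity)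
    (by rw [mul_div_assoc', div_le_one hx1]; linarith)
  linarith

lemma exists_pos_mul_inv_le_prod_Icc {r g : ℕ → ℝ} {D : ℝ} {m : ℕ}
    (hr : ∀ k, 1 ≤ k → 0 < r k) (hg : ∀ n ≥ m, 0 < g n) (hD : 0 ≤ D)
    (h : ∀ k ≥ m, log (g k) - D / k - (log (g (k + 1)) - D / (k + 1 : ℕ)) ≤ log (r (k + 1))) :
    ∃ c > 0, ∀ n ≥ m, c * (g n)⁻¹ ≤ ∏ k ∈ Icc 1 n, r k := by
  set F : ℕ → ℝ := fun n => log (g n) - D / n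
  have hPm : 0 < ∏ k ∈ Icc 1 m, r k := prod_pos fun k hk => hr k (mem_Icc.1 hk).1
  refine ⟨(∏ k ∈ Icc 1 m, r k) * exp (F m), by positivity, fun n hn => ?_⟩
  calc (∏ k ∈ Icc 1 m, r k) * exp (F m) * (g n)⁻¹
      = (∏ k ∈ Icc 1 m, r k) * exp (F m + -log (g n)) := by
        rw [exp_add, exp_neg, exp_log (hg n hn), mul_assoc]
    _ ≤ (∏ k ∈ Icc 1 m, r k) * exp (F m - F n) := by
        gcongr
        linarith [show 0 ≤ D / n by positivity]
    _ ≤ ∏ k ∈ Icc 1 n, r k := prod_Icc_mul_exp_sub_le_prod_Icc hr h n hn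

lemma not_summable_of_mul_inv_iterLogProd_le {f : ℕ → ℝ} {c : ℝ} {K m : ℕ} (hc : 0 < c)
    (h : ∀ n ≥ m, c * (iterLogProd K n)⁻¹ ≤ f n) : ¬ Summable f := by
  refine fun hs => not_summable_inv_iterLogProd K <|
    (summable_mul_left_iff hc.ne').1 (hs.of_norm_bounded_eventually_nat ?_)
  filter_upwards [eventually_ge_atTop m,
    tendsto_natCast_atTop_atTop.eventually (eventually_forall_iterate_log_pos K)] with n hn hpos
  rw [norm_of_nonneg (mul_nonneg hc.le (inv_nonneg.2 (iterLogProd_pos hpos).le))]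
  exact h n hn

theorem random_walk_recurrent_general
    (α : ℕ → ℝ) (C : ℝ)
    (hα : ∀ n : ℕ, 1 ≤ n → 0 < α n ∧ α n < min C ((n : ℝ) / 2))
    (lam mu : ℕ → ℝ)
    (hlam : ∀ n : ℕ, lam n = 1 / 2 + α n / (n : ℝ))
    (hmu : ∀ n : ℕ, mu n = 1 / 2 - α n / (n : ℝ))
    (K : ℕ) (n₀ : ℕ)
    (h : ∀ n > n₀,
      α n ≤ (1 / 4) *
        (1 + ∑ k ∈ Finset.Icc 1 K,
              1 / ∏ j ∈ Finset.Icc 1 k, Real.log^[j] (n : ℝ))) :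
    Filter.Tendsto
      (fun N : ℕ => ∑ n ∈ Finset.Icc 1 N, ∏ k ∈ Finset.Icc 1 n, mu k / lam k)
      Filter.atTop Filter.atTop := by
  have hr (k : ℕ) (hk : 1 ≤ k) : 0 < mu k / lam k := by
    have hk' : (0 : ℝ) < k := by exact_mod_cast hk
    obtain ⟨hα₀, hαk⟩ := hα k hk
    have : α k / k < 1 / 2 := by
      rw [div_lt_iff₀ hk']
      linarith [hαk.trans_le (min_le_right _ _)]
    rw [hmu, hlam]
    exact div_pos (by linarith) (by positivity)
  obtain ⟨m, hm⟩ : ∃ m : ℕ, ∀ k ≥ m, n₀ ≤ k ∧ 4 * C ≤ k ∧ ∀ i ≤ K, 0 < log^[i] (k : ℝ) :=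
    eventually_atTop.1 <| (eventually_ge_atTop n₀).and <|
      (tendsto_natCast_atTop_atTop.eventually_ge_atTop _).and
      (tendsto_natCast_atTop_atTop.eventually (eventually_forall_iterate_log_pos K))
  obtain ⟨c, hc, hlow⟩ := exists_pos_mul_inv_le_prod_Icc hr
    (fun n hn => iterLogProd_pos (hm n hn).2.2) (by positivity : 0 ≤ 16 * C ^ 2) fun k hk => by
      obtain ⟨hk₀, hkC, hpos⟩ := hm k hk
      obtain ⟨hα₀, hαC⟩ := hα (k + 1) (by omega)
      have hsum := h (k + 1) (by omega)
      rw [hmu, hlam]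
      push_cast at hsum ⊢
      exact sub_le_log_half_sub_div_half_add hpos hα₀.le
        ((hαC.trans_le (min_le_left _ _)).le) hkC hsum
  exact tendsto_sum_Icc_one_atTop_of_not_summable
    (fun n => (prod_pos fun k hk => hr k (mem_Icc.1 hk).1).le)
    (not_summable_of_mul_inv_iterLogProd_le hc hlow)

/-- **Series form of the recurrence criterion for the perturbed reflected random
walk**, with `λ_n = 1/2 + α_n/n` and `μ_n = 1/2 - α_n/n`. The series
`∑_{n=1}^∞ ∏_{k=1}^n μ_k/λ_k` diverges to `∞`, stated as: the partial sums tend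
to infinity. Here `Real.log^[k]` is the `k`-th iterate of `Real.log`. -/
theorem random_walk_recurrent
    (α : ℕ → ℝ) (C : ℝ) (hC : 0 < C)
    (hα : ∀ n : ℕ, 1 ≤ n → 0 < α n ∧ α n < min C ((n : ℝ) / 2))
    (lam mu : ℕ → ℝ)
    (hlam : ∀ n : ℕ, lam n = 1 / 2 + α n / (n : ℝ))
    (hmu : ∀ n : ℕ, mu n = 1 / 2 - α n / (n : ℝ))
    (K : ℕ) (hK : 1 ≤ K) (n₀ : ℕ)
    (h : ∀ n > n₀,
      α n ≤ (1 / 4) *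
        (1 + ∑ k ∈ Finset.Icc 1 K,
              1 / ∏ j ∈ Finset.Icc 1 k, Real.log^[j] (n : ℝ))) :
    Filter.Tendsto
      (fun N : ℕ => ∑ n ∈ Finset.Icc 1 N, ∏ k ∈ Finset.Icc 1 n, mu k / lam k)
      Filter.atTop Filter.atTop :=
  random_walk_recurrent_general α C hα lam mu hlam hmu K n₀ h
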